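/- Let l ≥ 1, let x_1, …, x_l be real numbers with x_i > −1/2 for all i, let M be the l × l matrix with entries M_{pq} = cos( π (x_p − x_q) / 2 ) / (1 + x_p + x_q), and let G be an l × l real symmetric positive semidefinite matrix. Then det( M ⊙ G ) ≥ det(G) · ∏_{i=1}^{l} 1/(1 + 2x_i), where ⊙ denotes the entrywise (Hadamard) product. In particular, with H(x) := det(M ⊙ G) and B(x) := det(G) · ∏_i (1 + 2x_i)^{−1}, one has H(x) ≥ B(x) with equality when all x_i = 0. -/

import Mathlib

/-!
Since `cos (π (x_p - x_q) / 2)` is a sum of two rank-one kernels and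
`1 / (1 + x_p + x_q) = ∫₀^∞ e^{-(x_p + 1/2) t} e^{-(x_q + 1/2) t} dt` is a Gram kernel, the Schur
product theorem makes `M` positive semidefinite, with diagonal entries `1 / (1 + 2 x_i)`. The
inequality is then Oppenheim's inequality `∏ A_ii · det B ≤ det (A ⊙ B)`, proved by induction on
the size. Write `A / α` for the Schur complement of the last diagonal entry `α` of `A`, and `b`
for the last column of `B`, with last entry `d`. Then
`(A ⊙ B) / (α d) = A₁₁ ⊙ (B / d) + (A / α) ⊙ (b bᵀ / d)` is a positive semidefinite perturbation
of `A₁₁ ⊙ (B / d)`, and the determinant is monotone under such perturbations.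
-/

open MeasureTheory Set Real

namespace Matrix

section Determinant

variable {n : Type*} [Fintype n] [DecidableEq n]

theorem det_conjStarAlgAut (U : unitary (Matrix n n ℝ)) (M : Matrix n n ℝ) :
    (Unitary.conjStarAlgAut ℝ _ U M).det = M.det := by
  have hU : ((U : Matrix n n ℝ) * star (U : Matrix n n ℝ)).det = 1 := by
    rw [Unitary.mul_star_self_of_mem U.2, det_one]
  rw [Unitary.conjStarAlgAut_apply, det_mul, det_mul, mul_right_comm, ← det_mul, hU, one_mul]

theorem PosSemidef.one_le_det_one_add {Q : Matrix n n ℝ} (hQ : Q.PosSemidef) :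
    1 ≤ (1 + Q).det := by
  have hdet : (1 + Q).det = ∏ i, (1 + hQ.1.eigenvalues i) := by
    conv_lhs => rw [hQ.1.spectral_theorem]
    rw [← map_one (Unitary.conjStarAlgAut ℝ _ hQ.1.eigenvectorUnitary), ← map_add,
      det_conjStarAlgAut, ← diagonal_one, diagonal_add, det_diagonal]
    rfl
  rw [hdet]
  exact Finset.one_le_prod fun i _ => le_add_of_nonneg_right (hQ.eigenvalues_nonneg i)

open scoped MatrixOrder in
theorem PosSemidef.det_le_det_add {X P : Matrix n n ℝ} (hX : X.PosSemidef) (hP : P.PosSemidef) :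
    X.det ≤ (X + P).det := by
  rcases eq_or_ne X.det 0 with hX0 | hX0
  · rw [hX0]
    exact (hX.add hP).det_nonneg
  set R := CFC.sqrt X
  have hR : R.PosSemidef := nonneg_iff_posSemidef.mp (CFC.sqrt_nonneg X)
  have hRR : R * R = X := CFC.sqrt_mul_sqrt_self X hX.nonneg
  have hRdet : IsUnit R.det := by
    rw [isUnit_iff_ne_zero]
    intro h
    apply hX0
    rw [← hRR, det_mul, h, zero_mul]
  have hRinv : (R⁻¹)ᴴ = R⁻¹ := by rw [conjTranspose_nonsing_inv, hR.1.eq]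
  have hQ : (R⁻¹ * P * R⁻¹).PosSemidef := by
    simpa only [hRinv] using hP.conjTranspose_mul_mul_same R⁻¹
  have hsplit : X + P = R * (1 + R⁻¹ * P * R⁻¹) * R := by
    rw [Matrix.mul_add, Matrix.add_mul, Matrix.mul_one, hRR, ← Matrix.mul_assoc,
      ← Matrix.mul_assoc, mul_nonsing_inv _ hRdet, Matrix.one_mul, Matrix.mul_assoc,
      nonsing_inv_mul _ hRdet, Matrix.mul_one]
  rw [hsplit, det_mul, det_mul, mul_right_comm, ← det_mul, hRR]
  exact le_mul_of_one_le_right hX.det_nonneg hQ.one_le_det_one_add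

theorem PosSemidef.det_eq_zero_of_diag_eq_zero {A : Matrix n n ℝ} (hA : A.PosSemidef) {j : n}
    (h : A j j = 0) : A.det = 0 := by
  refine det_eq_zero_of_column_eq_zero j fun i => ?_
  have hcol : A *ᵥ Pi.single j 1 = 0 := (hA.dotProduct_mulVec_zero_iff _).mp (by simp [h])
  simpa using congrFun hcol i

end Determinant

section SchurComplement

variable {m : Type*}

noncomputable def schurComplementInr (A : Matrix (m ⊕ Unit) (m ⊕ Unit) ℝ) : Matrix m m ℝ :=
  A.toBlocks₁₁ - A.toBlocks₁₂ * A.toBlocks₂₂⁻¹ * A.toBlocks₂₁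

theorem schurComplementInr_apply (A : Matrix (m ⊕ Unit) (m ⊕ Unit) ℝ) (i j : m) :
    A.schurComplementInr i j = A (.inl i) (.inl j) -
      A (.inl i) (.inr ()) * A (.inr ()) (.inl j) / A (.inr ()) (.inr ()) := by
  simp [schurComplementInr, mul_apply, toBlocks₁₁, toBlocks₁₂, toBlocks₂₁, toBlocks₂₂,
    div_eq_mul_inv]
  ring

theorem schurComplementInr_hadamard (A B : Matrix (m ⊕ Unit) (m ⊕ Unit) ℝ)
    (hA : A (.inr ()) (.inr ()) ≠ 0) (hB : B (.inr ()) (.inr ()) ≠ 0) :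
    (A ⊙ B).schurComplementInr = A.toBlocks₁₁ ⊙ B.schurComplementInr +
      A.schurComplementInr ⊙ ((B (.inr ()) (.inr ()))⁻¹ •
        vecMulVec (fun i => B (.inl i) (.inr ())) (fun j => B (.inr ()) (.inl j))) := by
  ext i j
  simp only [schurComplementInr_apply, add_apply, hadamard_apply, smul_apply, vecMulVec_apply,
    toBlocks₁₁, of_apply, smul_eq_mul]
  field_simp
  ring

variable [Fintype m]

theorem PosSemidef.schurComplementInr {A : Matrix (m ⊕ Unit) (m ⊕ Unit) ℝ} (hA : A.PosSemidef)
    (h : A (.inr ()) (.inr ()) ≠ 0) : A.schurComplementInr.PosSemidef := by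
  have hD : A.toBlocks₂₂.PosDef :=
    (hA.submatrix Sum.inr).posDef_iff_det_ne_zero.mpr (by simpa [det_unique, toBlocks₂₂] using h)
  have : Invertible A.toBlocks₂₂ :=
    invertibleOfIsUnitDet _ (by simpa [det_unique, toBlocks₂₂] using h)
  have h₂₁ : A.toBlocks₁₂ᴴ = A.toBlocks₂₁ :=
    (isHermitian_fromBlocks_iff.mp ((fromBlocks_toBlocks A).symm ▸ hA.1)).2.1
  have := (PosDef.fromBlocks₂₂ A.toBlocks₁₁ A.toBlocks₁₂ hD).mp
    (by rwa [h₂₁, fromBlocks_toBlocks])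
  rwa [h₂₁] at this

theorem PosSemidef.inv_smul_vecMulVec_inr {B : Matrix (m ⊕ Unit) (m ⊕ Unit) ℝ}
    (hB : B.PosSemidef) :
    ((B (.inr ()) (.inr ()))⁻¹ •
      vecMulVec (fun i => B (.inl i) (.inr ())) (fun j => B (.inr ()) (.inl j))).PosSemidef := by
  have hrow : (fun j => B (.inr ()) (.inl j)) = star fun i => B (.inl i) (.inr ()) := by
    ext j
    simpa using hB.1.apply (.inl j) (.inr ())
  rw [hrow]
  exact (posSemidef_vecMulVec_self_star _).smul (inv_nonneg.mpr hB.diag_nonneg)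

variable [DecidableEq m]

theorem det_eq_mul_det_schurComplementInr {A : Matrix (m ⊕ Unit) (m ⊕ Unit) ℝ}
    (h : A (.inr ()) (.inr ()) ≠ 0) :
    A.det = A (.inr ()) (.inr ()) * A.schurComplementInr.det := by
  have : Invertible A.toBlocks₂₂ :=
    invertibleOfIsUnitDet _ (by simpa [det_unique, toBlocks₂₂] using h)
  conv_lhs => rw [← fromBlocks_toBlocks A]
  rw [det_fromBlocks₂₂, invOf_eq_nonsing_inv, det_unique]
  rfl

end SchurComplement

section Oppenheim

def OppenheimInequality (n : Type*) [Fintype n] [DecidableEq n] : Prop :=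
  ∀ A B : Matrix n n ℝ, A.PosSemidef → B.PosSemidef → (∏ i, A i i) * B.det ≤ (A ⊙ B).det

variable {m n : Type*} [Fintype m] [DecidableEq m] [Fintype n] [DecidableEq n]

theorem OppenheimInequality.of_equiv (e : m ≃ n) (h : OppenheimInequality m) :
    OppenheimInequality n := by
  intro A B hA hB
  have := h (A.submatrix e e) (B.submatrix e e) (hA.submatrix e) (hB.submatrix e)
  rwa [← submatrix_hadamard, det_submatrix_equiv_self, det_submatrix_equiv_self,
    show ∏ i, A.submatrix e e i i = ∏ i, A i i from e.prod_comp fun i => A i i] at this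

theorem OppenheimInequality.sum_unit (ih : OppenheimInequality m) :
    OppenheimInequality (m ⊕ Unit) := by
  intro A B hA hB
  set α := A (.inr ()) (.inr ())
  set d := B (.inr ()) (.inr ())
  obtain hα | hα : 0 = α ∨ 0 < α := hA.diag_nonneg.eq_or_lt
  · rw [Finset.prod_eq_zero (Finset.mem_univ (.inr ())) hα.symm, zero_mul]
    exact (hA.hadamard hB).det_nonneg
  obtain hd | hd : 0 = d ∨ 0 < d := hB.diag_nonneg.eq_or_lt
  · rw [hB.det_eq_zero_of_diag_eq_zero hd.symm, mul_zero]
    exact (hA.hadamard hB).det_nonneg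
  have hA₁₁ : A.toBlocks₁₁.PosSemidef := hA.submatrix Sum.inl
  have hSB : B.schurComplementInr.PosSemidef := hB.schurComplementInr hd.ne'
  calc (∏ i, A i i) * B.det
      = α * d * ((∏ i, A.toBlocks₁₁ i i) * B.schurComplementInr.det) := by
        rw [Fintype.prod_sum_type, det_eq_mul_det_schurComplementInr hd.ne']
        simp only [Finset.univ_unique, Finset.prod_singleton, toBlocks₁₁, of_apply]
        ring
    _ ≤ α * d * (A.toBlocks₁₁ ⊙ B.schurComplementInr).det := by
        gcongr
        exact ih _ _ hA₁₁ hSB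
    _ ≤ α * d * (A ⊙ B).schurComplementInr.det := by
        rw [schurComplementInr_hadamard A B hα.ne' hd.ne']
        gcongr
        exact (hA₁₁.hadamard hSB).det_le_det_add
          ((hA.schurComplementInr hα.ne').hadamard hB.inv_smul_vecMulVec_inr)
    _ = (A ⊙ B).det :=
        (det_eq_mul_det_schurComplementInr (A := A ⊙ B) (mul_pos hα hd).ne').symm

theorem oppenheimInequality_fin : ∀ k, OppenheimInequality (Fin k)
  | 0 => fun A B _ _ => by simp
  | k + 1 => ((oppenheimInequality_fin k).sum_unit).of_equiv
      ((Equiv.sumCongr (.refl _) finOneEquiv.symm).trans finSumFinEquiv)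

theorem PosSemidef.prod_diag_mul_det_le_det_hadamard {A B : Matrix n n ℝ} (hA : A.PosSemidef)
    (hB : B.PosSemidef) : (∏ i, A i i) * B.det ≤ (A ⊙ B).det :=
  (oppenheimInequality_fin _).of_equiv (Fintype.equivFin n).symm A B hA hB

end Oppenheim

section Kernels

variable {n : Type*} [Fintype n]

theorem posSemidef_of_inv_add {a : n → ℝ} (ha : ∀ i, 0 < a i) :
    (of fun i j => (a i + a j)⁻¹).PosSemidef := by
  refine .of_dotProduct_mulVec_nonneg (by ext; simp [add_comm]) fun y => ?_
  set f : n → ℝ → ℝ := fun i t => y i * exp (-a i * t)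
  have hf : ∀ i j, IntegrableOn (fun t => f i t * f j t) (Ioi 0) := fun i j => by
    have := (integrableOn_exp_mul_Ioi (neg_lt_zero.mpr (add_pos (ha i) (ha j))) 0).const_mul
      (y i * y j)
    refine IntegrableOn.congr_fun this (fun t _ => ?_) measurableSet_Ioi
    simp only [f, neg_add, add_mul, exp_add]
    ring
  have hentry : ∀ i j, y i * (a i + a j)⁻¹ * y j = ∫ t in Ioi 0, f i t * f j t := fun i j => by
    have := integral_exp_mul_Ioi (neg_lt_zero.mpr (add_pos (ha i) (ha j))) 0
    simp only [mul_zero, exp_zero, neg_div_neg_eq, one_div] at this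
    rw [← this, ← integral_const_mul, ← integral_mul_const]
    refine setIntegral_congr_fun measurableSet_Ioi fun t _ => ?_
    simp only [f, neg_add, add_mul, exp_add]
    ring
  calc 0 ≤ ∫ t in Ioi 0, (∑ i, f i t) ^ 2 :=
        setIntegral_nonneg measurableSet_Ioi fun t _ => sq_nonneg _
    _ = star y ⬝ᵥ (of fun i j => (a i + a j)⁻¹) *ᵥ y := by
      simp only [sq, Finset.sum_mul_sum]
      rw [integral_finsetSum _ fun i _ => integrable_finsetSum _ fun j _ => hf i j]
      simp only [dotProduct, mulVec, of_apply, Pi.star_apply, star_trivial, Finset.mul_sum]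
      refine Finset.sum_congr rfl fun i _ => ?_
      rw [integral_finsetSum _ fun j _ => hf i j]
      refine Finset.sum_congr rfl fun j _ => ?_
      rw [← hentry, mul_assoc]

theorem posSemidef_cos_sub (θ : n → ℝ) : (of fun i j => cos (θ i - θ j)).PosSemidef := by
  have hsplit : (of fun i j => cos (θ i - θ j)) =
      vecMulVec (cos ∘ θ) (star (cos ∘ θ)) + vecMulVec (sin ∘ θ) (star (sin ∘ θ)) := by
    ext i j
    simp [vecMulVec_apply, cos_sub]
  rw [hsplit]
  exact (posSemidef_vecMulVec_self_star _).add (posSemidef_vecMulVec_self_star _)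

end Kernels

end Matrix

open Matrix in
theorem det_hadamard_ge_det_mul_prod_general (l : ℕ) (x : Fin l → ℝ)
    (hx : ∀ i, -(1 / 2) < x i) (M : Matrix (Fin l) (Fin l) ℝ)
    (hM : ∀ p q, M p q = Real.cos (Real.pi * (x p - x q) / 2) / (1 + x p + x q))
    (G : Matrix (Fin l) (Fin l) ℝ) (hG : G.PosSemidef) :
    (Matrix.hadamard M G).det ≥ G.det * ∏ i, 1 / (1 + 2 * x i) ∧
      ((∀ i, x i = 0) →
        (Matrix.hadamard M G).det = G.det * ∏ i, 1 / (1 + 2 * x i)) := by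
  have hM_eq : M = (of fun p q => ((x p + 1 / 2) + (x q + 1 / 2))⁻¹) ⊙
      of fun p q => cos (π * x p / 2 - π * x q / 2) := by
    ext p q
    rw [hM, hadamard_apply, of_apply, of_apply, div_eq_inv_mul]
    ring_nf
  have hM_psd : M.PosSemidef := hM_eq ▸
    (posSemidef_of_inv_add fun i => by linarith [hx i]).hadamard (posSemidef_cos_sub _)
  have hM_diag : ∀ i, M i i = 1 / (1 + 2 * x i) := fun i => by
    rw [hM, sub_self, mul_zero, zero_div, cos_zero]
    ring
  refine ⟨?_, fun hx0 => ?_⟩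
  · simpa only [hM_diag, mul_comm] using hM_psd.prod_diag_mul_det_le_det_hadamard hG
  · have hM_one : M = of 1 := by
      ext p q
      simp [hM, hx0]
    simp [hM_one, hx0]

/-- Oppenheim-type inequality `H(x) ≥ B(x)` from the consistency proof: with
`M_{pq} = cos(π(x_p - x_q)/2)/(1 + x_p + x_q)` (all `x_i > -1/2`) and `G` real
symmetric positive semidefinite, `det(M ⊙ G) ≥ det G · ∏_i (1 + 2x_i)^{-1}`,
with equality when all `x_i = 0`. -/
theorem det_hadamard_ge_det_mul_prod (l : ℕ) (hl : 1 ≤ l) (x : Fin l → ℝ)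
    (hx : ∀ i, -(1 / 2) < x i) (M : Matrix (Fin l) (Fin l) ℝ)
    (hM : ∀ p q, M p q = Real.cos (Real.pi * (x p - x q) / 2) / (1 + x p + x q))
    (G : Matrix (Fin l) (Fin l) ℝ) (hG : G.PosSemidef) :
    (Matrix.hadamard M G).det ≥ G.det * ∏ i, 1 / (1 + 2 * x i) ∧
      ((∀ i, x i = 0) →
        (Matrix.hadamard M G).det = G.det * ∏ i, 1 / (1 + 2 * x i)) :=
  det_hadamard_ge_det_mul_prod_general l x hx M hM G hG
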